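/- Let λ ∈ K_v^× with v(λ − 1) > 0 and such that λ is not a root of unity, and for i ≥ 0 set w_i := v(λ^{ℓ^i} − 1). Then the sequence (w_i) is strictly increasing, there is a smallest integer κ ≥ 0 with w_κ > e/(ℓ−1), and this κ satisfies ℓ^κ ≤ ℓe/(ℓ−1); in particular κ ≤ ⌊log(2e)/log ℓ⌋. -/

import Mathlib

/-!
Write `λ^(ℓ^(i+1)) - 1 = (1 + μ)^ℓ - 1` with `μ = λ^(ℓ^i) - 1`. In the binomial expansion every
middle coefficient is divisible by `ℓ`, so `w_{i+1} ≥ min (e + w_i, ℓ w_i)`, which exceeds `w_i`.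
As long as `w_i ≤ e/(ℓ-1)` the minimum is `ℓ w_i`, so from `w_0 ≥ 1` the valuations grow at least
like `ℓ^i`. Hence they pass `e/(ℓ-1)` at some first index `κ`, and `ℓ^(κ-1) ≤ w_(κ-1) ≤ e/(ℓ-1)`.
-/

namespace AddValuation

variable {R Γ₀ : Type*} [LinearOrderedAddCommMonoidWithTop Γ₀]

theorem natCast_nonneg [Ring R] (v : AddValuation R Γ₀) (n : ℕ) : 0 ≤ v n := by
  induction n with
  | zero => simp
  | succ n ih =>
    push_cast
    exact v.map_le_add ih v.map_one.ge

theorem min_le_map_pow_prime_sub_one [CommRing R] (v : AddValuation R Γ₀) {p : ℕ} (hp : p.Prime)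
    {x : R} (hx : 0 ≤ v (x - 1)) :
    min (v p + v (x - 1)) (p • v (x - 1)) ≤ v (x ^ p - 1) := by
  have hexpand : x ^ p - 1 = ∑ k ∈ Finset.range p, (x - 1) ^ (k + 1) * (p.choose (k + 1) : R) := by
    conv_lhs => rw [← sub_add_cancel x 1, add_pow, Finset.sum_range_succ']
    simp
  rw [hexpand]
  refine v.map_le_sum fun k hk => ?_
  rw [v.map_mul, v.map_pow]
  rcases (Finset.mem_range.mp hk).nat_succ_le.eq_or_lt with hlast | hmiddle
  · subst hlast
    simp
  · obtain ⟨m, hm⟩ := hp.dvd_choose_self k.succ_ne_zero hmiddle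
    refine (min_le_left _ _).trans ?_
    rw [hm, Nat.cast_mul, v.map_mul, add_comm]
    exact add_le_add (le_self_nsmul hx k.succ_ne_zero) (le_add_of_nonneg_right (v.natCast_nonneg m))

end AddValuation

section ThresholdSequence

variable {w : ℕ → ℝ} {e ℓ : ℝ}

theorem forall_pos_of_min_le (he : 0 ≤ e) (hℓ : 0 < ℓ)
    (hstep : ∀ i, 0 < w i → min (e + w i) (ℓ * w i) ≤ w (i + 1)) (h0 : 0 < w 0) (i : ℕ) :
    0 < w i := by
  induction i with
  | zero => exact h0
  | succ i ih => exact (lt_min (by linarith) (by positivity)).trans_le (hstep i ih)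

theorem strictMono_of_min_le (he : 0 < e) (hℓ : 1 < ℓ)
    (hstep : ∀ i, min (e + w i) (ℓ * w i) ≤ w (i + 1)) (hpos : ∀ i, 0 < w i) : StrictMono w :=
  strictMono_nat_of_lt_succ fun i =>
    (lt_min (by linarith [hpos i]) (by nlinarith [hpos i])).trans_le (hstep i)

theorem pow_le_of_forall_le_div (hℓ : 1 < ℓ)
    (hstep : ∀ i, min (e + w i) (ℓ * w i) ≤ w (i + 1)) (h0 : 1 ≤ w 0) {n : ℕ}
    (hn : ∀ j < n, w j ≤ e / (ℓ - 1)) : ℓ ^ n ≤ w n := by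
  induction n with
  | zero => simpa using h0
  | succ n ih =>
    have hsmall : (ℓ - 1) * w n ≤ e := (le_div_iff₀' (by linarith)).mp (hn n n.lt_succ_self)
    calc ℓ ^ (n + 1) = ℓ * ℓ ^ n := pow_succ' ℓ n
      _ ≤ ℓ * w n := by gcongr; exact ih fun j hj => hn j (hj.trans n.lt_succ_self)
      _ = min (e + w n) (ℓ * w n) := (min_eq_right (by linarith)).symm
      _ ≤ w (n + 1) := hstep n

theorem exists_div_lt (hℓ : 1 < ℓ) (hstep : ∀ i, min (e + w i) (ℓ * w i) ≤ w (i + 1))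
    (h0 : 1 ≤ w 0) : ∃ n, e / (ℓ - 1) < w n := by
  by_contra! hbounded
  obtain ⟨n, hn⟩ := pow_unbounded_of_one_lt (e / (ℓ - 1)) hℓ
  exact (hn.trans_le (pow_le_of_forall_le_div hℓ hstep h0 fun j _ => hbounded j)).not_ge
    (hbounded n)

theorem pow_le_mul_div_of_forall_le_div (hℓ : 1 < ℓ) (he : 1 ≤ e)
    (hstep : ∀ i, min (e + w i) (ℓ * w i) ≤ w (i + 1)) (h0 : 1 ≤ w 0) {n : ℕ}
    (hn : ∀ j < n, w j ≤ e / (ℓ - 1)) : ℓ ^ n ≤ ℓ * e / (ℓ - 1) := by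
  rcases n with _ | n
  · rw [pow_zero, le_div_iff₀ (by linarith)]
    nlinarith
  · calc ℓ ^ (n + 1) = ℓ * ℓ ^ n := pow_succ' ℓ n
      _ ≤ ℓ * (e / (ℓ - 1)) := by
        gcongr
        exact (pow_le_of_forall_le_div hℓ hstep h0 fun j hj => hn j (hj.trans n.lt_succ_self)).trans
          (hn n n.lt_succ_self)
      _ = ℓ * e / (ℓ - 1) := (mul_div_assoc ..).symm

theorem mul_div_sub_one_le_two_mul (hℓ : 2 ≤ ℓ) (he : 0 ≤ e) : ℓ * e / (ℓ - 1) ≤ 2 * e := by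
  rw [div_le_iff₀ (by linarith)]
  nlinarith

end ThresholdSequence

theorem natCast_le_floor_log_div_log {b y : ℝ} {n : ℕ} (hb : 1 < b) (h : b ^ n ≤ y) :
    (n : ℤ) ≤ ⌊Real.log y / Real.log b⌋ := by
  rw [Int.le_floor, Int.cast_natCast, ← Real.logb, Real.le_logb_iff_rpow_le hb
    ((pow_pos (by linarith) n).trans_le h), Real.rpow_natCast]
  exact h

theorem valuation_jump_kappa_general
    (K : Type*) [Field K]
    (ℓ : ℕ) (hℓ : Nat.Prime ℓ) (e : ℕ) (he : 1 ≤ e)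
    (v : K → WithTop ℤ)
    (hv0 : ∀ x : K, v x = ⊤ ↔ x = 0)
    (hvmul : ∀ x y : K, v (x * y) = v x + v y)
    (hvadd : ∀ x y : K, min (v x) (v y) ≤ v (x + y))
    (hv1 : v 1 = 0)
    (hvℓ : v (ℓ : K) = ((e : ℤ) : WithTop ℤ))
    (lam : K) (hpos : 0 < v (lam - 1))
    (htors : ∀ n : ℕ, 0 < n → lam ^ n ≠ 1) :
    ∃ w : ℕ → ℤ,
      (∀ i : ℕ, v (lam ^ ℓ ^ i - 1) = ((w i : ℤ) : WithTop ℤ)) ∧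
      StrictMono w ∧
      ∃ κ : ℕ,
        ((e : ℝ) / ((ℓ : ℝ) - 1) < (w κ : ℝ) ∧
          ∀ j < κ, (w j : ℝ) ≤ (e : ℝ) / ((ℓ : ℝ) - 1)) ∧
        (ℓ : ℝ) ^ κ ≤ (ℓ : ℝ) * e / ((ℓ : ℝ) - 1) ∧
        (κ : ℤ) ≤ ⌊Real.log (2 * e) / Real.log ℓ⌋ := by
  let V := AddValuation.of v ((hv0 0).mpr rfl) hv1 hvadd hvmul
  choose w hw using fun i => WithTop.ne_top_iff_exists.mp fun h =>
    htors (ℓ ^ i) (pow_pos hℓ.pos i) (sub_eq_zero.mp ((hv0 _).mp h))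
  have hw0 : (1 : ℝ) ≤ w 0 := by
    rw [← pow_one lam, ← pow_zero ℓ, ← hw 0] at hpos
    exact_mod_cast WithTop.coe_lt_coe.mp hpos
  have hℓ1 : (1 : ℝ) < ℓ := by exact_mod_cast hℓ.one_lt
  have he1 : (1 : ℝ) ≤ e := by exact_mod_cast he
  have hstep_of_pos : ∀ i, 0 < (w i : ℝ) → min ((e : ℝ) + w i) (ℓ * w i) ≤ w (i + 1) := by
    intro i hi
    have h := V.min_le_map_pow_prime_sub_one hℓ (x := lam ^ ℓ ^ i) (by
      change 0 ≤ v _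
      rw [← hw i]
      exact_mod_cast hi.le)
    simp only [V, AddValuation.of_apply, hvℓ, ← hw, ← pow_mul, ← pow_succ] at h
    exact_mod_cast h
  have hwpos := forall_pos_of_min_le (by linarith) (by linarith) hstep_of_pos (by linarith)
  have hstep := fun i => hstep_of_pos i (hwpos i)
  have hex := exists_div_lt hℓ1 hstep hw0
  have hmin : ∀ j < Nat.find hex, (w j : ℝ) ≤ e / (ℓ - 1) := fun j hj =>
    not_lt.mp (Nat.find_min hex hj)
  have hbound := pow_le_mul_div_of_forall_le_div hℓ1 he1 hstep hw0 hmin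
  refine ⟨w, fun i => (hw i).symm,
    fun _ _ hij => Int.cast_lt.mp (strictMono_of_min_le (by linarith) hℓ1 hstep hwpos hij),
    Nat.find hex, ⟨Nat.find_spec hex, hmin⟩, hbound, natCast_le_floor_log_div_log hℓ1 ?_⟩
  exact hbound.trans (mul_div_sub_one_le_two_mul (by exact_mod_cast hℓ.two_le) (by linarith))

/-- Let `K_v` be a complete discretely valued field of characteristic `0` with perfect
residue field of characteristic `ℓ` (a prime), additive valuation `v` normalized so that
`v(K_v^×) = ℤ` (with `v(0) = ⊤`), and absolute ramification index `e = v(ℓ)`.  Let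
`λ ∈ K_v^×` with `v(λ − 1) > 0` that is not a root of unity, and set
`w_i := v(λ^(ℓ^i) − 1)` (a finite integer).  Then `(w_i)` is strictly increasing, there
is a smallest integer `κ ≥ 0` with `w_κ > e/(ℓ−1)`, and this `κ` satisfies
`ℓ^κ ≤ ℓe/(ℓ−1)`; in particular `κ ≤ ⌊log(2e)/log ℓ⌋`. -/
theorem valuation_jump_kappa
    (K : Type*) [Field K] [CharZero K]
    (ℓ : ℕ) (hℓ : Nat.Prime ℓ) (e : ℕ) (he : 1 ≤ e)
    (v : K → WithTop ℤ)
    (hv0 : ∀ x : K, v x = ⊤ ↔ x = 0)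
    (hvmul : ∀ x y : K, v (x * y) = v x + v y)
    (hvadd : ∀ x y : K, min (v x) (v y) ≤ v (x + y))
    (hv1 : v 1 = 0)
    (hsurj : ∀ m : ℤ, ∃ x : K, v x = (m : WithTop ℤ))
    (hvℓ : v (ℓ : K) = ((e : ℤ) : WithTop ℤ))
    (lam : K) (hlam : lam ≠ 0) (hpos : 0 < v (lam - 1))
    (htors : ∀ n : ℕ, 0 < n → lam ^ n ≠ 1) :
    ∃ w : ℕ → ℤ,
      (∀ i : ℕ, v (lam ^ ℓ ^ i - 1) = ((w i : ℤ) : WithTop ℤ)) ∧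
      StrictMono w ∧
      ∃ κ : ℕ,
        ((e : ℝ) / ((ℓ : ℝ) - 1) < (w κ : ℝ) ∧
          ∀ j < κ, (w j : ℝ) ≤ (e : ℝ) / ((ℓ : ℝ) - 1)) ∧
        (ℓ : ℝ) ^ κ ≤ (ℓ : ℝ) * e / ((ℓ : ℝ) - 1) ∧
        (κ : ℤ) ≤ ⌊Real.log (2 * e) / Real.log ℓ⌋ :=
  valuation_jump_kappa_general K ℓ hℓ e he v hv0 hvmul hvadd hv1 hvℓ lam hpos htors
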